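/- Let k be an algebraically closed field of characteristic not 2 and let f₁, f₂ ∈ k[X,Y] be independent quadratics, written fᵢ = aᵢX² + 2bᵢXY + cᵢY² + 2dᵢX + 2eᵢY + gᵢ. Then the binary quadratic form Φ(U,V) = (a₁c₁ − b₁²)U² + (a₁c₂ + a₂c₁ − 2b₁b₂)UV + (a₂c₂ − b₂²)V² is not identically zero. -/

import Mathlib

/-!
`Φ(U,V) = det (U M₁ + V M₂)` where `Mᵢ = [[aᵢ, bᵢ], [bᵢ, cᵢ]]`. If `Φ ≡ 0`, the
square of every `2 × 2` minor of the matrix with rows `(aᵢ, bᵢ, cᵢ)` is a combination of the three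
coefficients of `Φ`, so these rows are proportional. A nontrivial combination `α f₁ + β f₂` then has
no quadratic part, hence total degree at most `1`, contradicting independence.
-/

open MvPolynomial

/-- Two quadratics are independent if every nontrivial linear combination has degree 2. -/
def Indep {k : Type*} [Field k] (f₁ f₂ : MvPolynomial (Fin 2) k) : Prop :=
  ∀ α β : k, ¬(α = 0 ∧ β = 0) → (C α * f₁ + C β * f₂).totalDegree = 2

section Conic

variable {R : Type*} [CommSemiring R]

noncomputable def conic (a b c d e g : R) : MvPolynomial (Fin 2) R :=
  C a * X 0 ^ 2 + C (2 * b) * (X 0 * X 1) + C c * X 1 ^ 2 + C (2 * d) * X 0 + C (2 * e) * X 1 + C g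

theorem C_mul_conic_add_C_mul_conic (α β a₁ b₁ c₁ d₁ e₁ g₁ a₂ b₂ c₂ d₂ e₂ g₂ : R) :
    C α * conic a₁ b₁ c₁ d₁ e₁ g₁ + C β * conic a₂ b₂ c₂ d₂ e₂ g₂ =
      conic (α * a₁ + β * a₂) (α * b₁ + β * b₂) (α * c₁ + β * c₂) (α * d₁ + β * d₂)
        (α * e₁ + β * e₂) (α * g₁ + β * g₂) := by
  simp only [conic, map_add, map_mul]
  ring

theorem totalDegree_C_mul_X_add_C_mul_X_add_C_le_one {σ : Type*} (d e g : R) (i j : σ) :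
    (C d * X i + C e * X j + C g : MvPolynomial σ R).totalDegree ≤ 1 := by
  refine (totalDegree_add _ _).trans (max_le ((totalDegree_add _ _).trans (max_le ?_ ?_)) ?_)
  · exact (totalDegree_mul _ _).trans (by simpa using (isHomogeneous_X R i).totalDegree_le)
  · exact (totalDegree_mul _ _).trans (by simpa using (isHomogeneous_X R j).totalDegree_le)
  · simp

theorem totalDegree_conic_zero_le_one (d e g : R) : (conic 0 0 0 d e g).totalDegree ≤ 1 := by
  simp only [conic, mul_zero, map_zero, zero_mul, zero_add]
  exact totalDegree_C_mul_X_add_C_mul_X_add_C_le_one _ _ _ _ _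

end Conic

section Pencil

variable {R : Type*} [CommRing R]

theorem exists_combination_eq_zero_of_cross_eq_zero [Nontrivial R] {a₁ b₁ c₁ a₂ b₂ c₂ : R}
    (hab : a₁ * b₂ - a₂ * b₁ = 0) (hac : a₁ * c₂ - a₂ * c₁ = 0) (hbc : b₁ * c₂ - b₂ * c₁ = 0) :
    ∃ α β : R, ¬(α = 0 ∧ β = 0) ∧
      α * a₁ + β * a₂ = 0 ∧ α * b₁ + β * b₂ = 0 ∧ α * c₁ + β * c₂ = 0 := by
  by_cases ha₁ : a₁ = 0
  · by_cases hb₁ : b₁ = 0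
    · by_cases hc₁ : c₁ = 0
      · exact ⟨1, 0, by simp, by simp [ha₁], by simp [hb₁], by simp [hc₁]⟩
      · exact ⟨c₂, -c₁, by simp [hc₁], by linear_combination hac, by linear_combination hbc,
          by ring⟩
    · exact ⟨b₂, -b₁, by simp [hb₁], by linear_combination hab, by ring,
        by linear_combination -hbc⟩
  · exact ⟨a₂, -a₁, by simp [ha₁], by ring, by linear_combination -hab,
      by linear_combination -hac⟩

theorem exists_combination_eq_zero_of_det_pencil_eq_zero [IsDomain R] {a₁ b₁ c₁ a₂ b₂ c₂ : R}
    (h₁ : a₁ * c₁ - b₁ ^ 2 = 0) (h₁₂ : a₁ * c₂ + a₂ * c₁ - 2 * b₁ * b₂ = 0)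
    (h₂ : a₂ * c₂ - b₂ ^ 2 = 0) :
    ∃ α β : R, ¬(α = 0 ∧ β = 0) ∧
      α * a₁ + β * a₂ = 0 ∧ α * b₁ + β * b₂ = 0 ∧ α * c₁ + β * c₂ = 0 := by
  refine exists_combination_eq_zero_of_cross_eq_zero (sq_eq_zero_iff.mp ?_)
    (sq_eq_zero_iff.mp ?_) (sq_eq_zero_iff.mp ?_)
  · linear_combination a₁ * a₂ * h₁₂ - a₂ ^ 2 * h₁ - a₁ ^ 2 * h₂
  · linear_combination (a₁ * c₂ + a₂ * c₁ + 2 * b₁ * b₂) * h₁₂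
      - 4 * a₂ * c₂ * h₁ - 4 * b₁ ^ 2 * h₂
  · linear_combination c₁ * c₂ * h₁₂ - c₂ ^ 2 * h₁ - c₁ ^ 2 * h₂

end Pencil

theorem stmt11_general {k : Type*} [Field k]
    (a₁ b₁ c₁ d₁ e₁ g₁ a₂ b₂ c₂ d₂ e₂ g₂ : k)
    (f₁ f₂ : MvPolynomial (Fin 2) k)
    (hf₁ : f₁ = C a₁ * X 0 ^ 2 + C (2 * b₁) * (X 0 * X 1) + C c₁ * X 1 ^ 2 +
      C (2 * d₁) * X 0 + C (2 * e₁) * X 1 + C g₁)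
    (hf₂ : f₂ = C a₂ * X 0 ^ 2 + C (2 * b₂) * (X 0 * X 1) + C c₂ * X 1 ^ 2 +
      C (2 * d₂) * X 0 + C (2 * e₂) * X 1 + C g₂)
    (hind : Indep f₁ f₂) :
    ¬(a₁ * c₁ - b₁ ^ 2 = 0 ∧ a₁ * c₂ + a₂ * c₁ - 2 * b₁ * b₂ = 0 ∧
      a₂ * c₂ - b₂ ^ 2 = 0) := by
  rintro ⟨h₁, h₁₂, h₂⟩
  obtain ⟨α, β, hαβ, ha, hb, hc⟩ := exists_combination_eq_zero_of_det_pencil_eq_zero h₁ h₁₂ h₂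
  have hdeg := hind α β hαβ
  rw [show f₁ = conic a₁ b₁ c₁ d₁ e₁ g₁ from hf₁, show f₂ = conic a₂ b₂ c₂ d₂ e₂ g₂ from hf₂,
    C_mul_conic_add_C_mul_conic, ha, hb, hc] at hdeg
  have := totalDegree_conic_zero_le_one (α * d₁ + β * d₂) (α * e₁ + β * e₂) (α * g₁ + β * g₂)
  omega

/-- For independent quadratics `fᵢ = aᵢX² + 2bᵢXY + cᵢY² + 2dᵢX + 2eᵢY + gᵢ`
over an algebraically closed field, the binary form
`Φ(U,V) = (a₁c₁ − b₁²)U² + (a₁c₂ + a₂c₁ − 2b₁b₂)UV + (a₂c₂ − b₂²)V²`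
is not identically zero. -/
theorem stmt11 {k : Type*} [Field k] [IsAlgClosed k] (hch : (2 : k) ≠ 0)
    (a₁ b₁ c₁ d₁ e₁ g₁ a₂ b₂ c₂ d₂ e₂ g₂ : k)
    (f₁ f₂ : MvPolynomial (Fin 2) k)
    (hf₁ : f₁ = C a₁ * X 0 ^ 2 + C (2 * b₁) * (X 0 * X 1) + C c₁ * X 1 ^ 2 +
      C (2 * d₁) * X 0 + C (2 * e₁) * X 1 + C g₁)
    (hf₂ : f₂ = C a₂ * X 0 ^ 2 + C (2 * b₂) * (X 0 * X 1) + C c₂ * X 1 ^ 2 +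
      C (2 * d₂) * X 0 + C (2 * e₂) * X 1 + C g₂)
    (hind : Indep f₁ f₂) :
    ¬(a₁ * c₁ - b₁ ^ 2 = 0 ∧ a₁ * c₂ + a₂ * c₁ - 2 * b₁ * b₂ = 0 ∧
      a₂ * c₂ - b₂ ^ 2 = 0) :=
  stmt11_general a₁ b₁ c₁ d₁ e₁ g₁ a₂ b₂ c₂ d₂ e₂ g₂ f₁ f₂ hf₁ hf₂ hind
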